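/- Let N ≥ 2, m ≥ 1, and let B be an N×N skew-symmetric integer matrix. Set B(1) = B and B(i+1) = μ_i(B(i)) for 1 ≤ i ≤ m, suppose that node i is a sink of B(i) for i = 1, 2, …, m, and suppose B(m+1) = ρ^m B ρ^{−m} (so B is a period m sink-type matrix). Then the matrix C := Σ_{i=1}^{m} ρ^{−(i−1)} B(i) ρ^{i−1} satisfies μ₁(C) = ρ C ρ⁻¹, i.e. C has mutation period 1. -/

import Mathlib

open Matrix

/-- The cyclic permutation matrix ρ: ρ_{i+1,i} = 1 (1-based), ρ_{1,N} = 1. -/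
def rhoM (N : ℕ) : Matrix (Fin N) (Fin N) ℤ :=
  Matrix.of fun i j => if (i : ℕ) = ((j : ℕ) + 1) % N then 1 else 0

/-- The skew-rotation τ: equal to ρ except τ_{1,N} = −1. -/
def tauM (N : ℕ) : Matrix (Fin N) (Fin N) ℤ :=
  Matrix.of fun i j =>
    if (i : ℕ) = ((j : ℕ) + 1) % N then (if (j : ℕ) + 1 = N then -1 else 1) else 0

/-- Fomin–Zelevinsky matrix mutation at node `k`. -/
def mutB {N : ℕ} (k : Fin N) (B : Matrix (Fin N) (Fin N) ℤ) : Matrix (Fin N) (Fin N) ℤ :=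
  Matrix.of fun i j =>
    if i = k ∨ j = k then -B i j
    else B i j + (|B i k| * B k j + B i k * |B k j|) / 2

/-- Node `k` is a sink of `B` if all entries of column `k` are nonnegative. -/
def IsSink {N : ℕ} (k : Fin N) (B : Matrix (Fin N) (Fin N) ℤ) : Prop :=
  ∀ i, 0 ≤ B i k


/-- Mutation at node `i+1` (1-based), i.e. at the vertex with 0-based index `i % N`. -/
def mutAt (N : ℕ) (i : ℕ) (B : Matrix (Fin N) (Fin N) ℤ) : Matrix (Fin N) (Fin N) ℤ :=
  if h : 0 < N then mutB ⟨i % N, Nat.mod_lt _ h⟩ B else B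

/-- The chain of mutations `B(1), B(2), …` (0-based: `mutChain B i = B(i+1)`),
where `B(1) = B` and `B(i+1) = μ_i(B(i))`. -/
def mutChain {N : ℕ} (B : Matrix (Fin N) (Fin N) ℤ) : ℕ → Matrix (Fin N) (Fin N) ℤ
  | 0 => B
  | i + 1 => mutAt N i (mutChain B i)


/-!
At a sink `k` of a skew-symmetric matrix the correction term `|b_ik| b_kj + b_ik |b_kj|` of the
mutation vanishes, since `b_ik ≥ 0 ≥ b_kj`, so `μ_k` merely negates row and column `k`; in
particular it is additive over skew-symmetric matrices sharing the sink `k`. Conjugation by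
`ρ^(i-1)` relabels node `i` as node `1`, and mutation commutes with relabelling, so the `i`-th
summand of `C` is skew-symmetric with sink `1` and its mutation at `1` is
`ρ^(-(i-1)) B(i+1) ρ^(i-1)`. Hence `μ₁(C) = Σ ρ^(-(i-1)) B(i+1) ρ^(i-1)`, which is `ρ C ρ⁻¹` after
shifting the index, the last term `ρ^(-(m-1)) B(m+1) ρ^(m-1)` becoming `ρ B ρ⁻¹` by periodicity.
-/

open Fin.NatCast

theorem sum_range_conj_succ_eq_conj_sum {R : Type*} [Semiring R] {a b : R} (hab : a * b = 1)
    (hba : b * a = 1) {f : ℕ → R} {m : ℕ} (hper : f m = a ^ m * f 0 * b ^ m) :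
    ∑ i ∈ Finset.range m, b ^ i * f (i + 1) * a ^ i
      = a * (∑ i ∈ Finset.range m, b ^ i * f i * a ^ i) * b := by
  cases m with
  | zero => simp
  | succ n =>
    have shift (i : ℕ) :
        a * (b ^ (i + 1) * f (i + 1) * a ^ (i + 1)) * b = b ^ i * f (i + 1) * a ^ i := by
      rw [pow_succ', pow_succ]
      simp only [← mul_assoc, hab, one_mul]
      simp only [mul_assoc, hab, mul_one]
    have wrap : b ^ n * f (n + 1) * a ^ n = a * f 0 * b := by
      rw [hper, pow_succ a, pow_succ' b]
      simp only [← mul_assoc, pow_mul_pow_eq_one n hba, one_mul]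
      simp only [mul_assoc, pow_mul_pow_eq_one n hba, mul_one]
    rw [Finset.mul_sum, Finset.sum_mul, Finset.sum_range_succ, Finset.sum_range_succ', wrap]
    simp [shift]

section Mutation

variable {N : ℕ}

theorem apply_swap_of_transpose_eq_neg {A : Matrix (Fin N) (Fin N) ℤ} (hA : Aᵀ = -A)
    (i j : Fin N) :
    A j i = -A i j :=
  congrFun (congrFun hA i) j

theorem IsSink.submatrix {k : Fin N} {A : Matrix (Fin N) (Fin N) ℤ} (e : Fin N ≃ Fin N)
    (hk : IsSink (e k) A) : IsSink k (A.submatrix e e) :=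
  fun i => hk (e i)

theorem IsSink.sum {ι : Type*} {s : Finset ι} {k : Fin N} {A : ι → Matrix (Fin N) (Fin N) ℤ}
    (hk : ∀ i ∈ s, IsSink k (A i)) : IsSink k (∑ i ∈ s, A i) := by
  intro j
  rw [Matrix.sum_apply]
  exact Finset.sum_nonneg fun i hi => hk i hi j

theorem mutB_submatrix (e : Fin N ≃ Fin N) (k : Fin N) (A : Matrix (Fin N) (Fin N) ℤ) :
    mutB k (A.submatrix e e) = (mutB (e k) A).submatrix e e := by
  ext i j
  simp [mutB, e.apply_eq_iff_eq]

theorem mutB_of_isSink {k : Fin N} {A : Matrix (Fin N) (Fin N) ℤ} (hA : Aᵀ = -A)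
    (hk : IsSink k A) :
    mutB k A = Matrix.of fun i j => if i = k ∨ j = k then -A i j else A i j := by
  ext i j
  have hkj : A k j ≤ 0 := by
    have := hk j
    rw [apply_swap_of_transpose_eq_neg hA] at this
    omega
  simp only [mutB, Matrix.of_apply, abs_of_nonneg (hk i), abs_of_nonpos hkj]
  split_ifs <;> simp

theorem transpose_mutB_of_isSink {k : Fin N} {A : Matrix (Fin N) (Fin N) ℤ} (hA : Aᵀ = -A)
    (hk : IsSink k A) : (mutB k A)ᵀ = -mutB k A := by
  ext i j
  simp only [mutB_of_isSink hA hk, Matrix.transpose_apply, Matrix.neg_apply, Matrix.of_apply,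
    apply_swap_of_transpose_eq_neg hA i j, or_comm (a := j = k)]
  split_ifs <;> simp

theorem mutB_sum_of_isSink {ι : Type*} {s : Finset ι} {k : Fin N}
    {A : ι → Matrix (Fin N) (Fin N) ℤ} (hA : ∀ i ∈ s, (A i)ᵀ = -A i)
    (hk : ∀ i ∈ s, IsSink k (A i)) : mutB k (∑ i ∈ s, A i) = ∑ i ∈ s, mutB k (A i) := by
  have hsum : (∑ i ∈ s, A i)ᵀ = -∑ i ∈ s, A i := by
    rw [Matrix.transpose_sum, ← Finset.sum_neg_distrib]
    exact Finset.sum_congr rfl hA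
  rw [mutB_of_isSink hsum (IsSink.sum hk),
    Finset.sum_congr rfl fun i hi => mutB_of_isSink (hA i hi) (hk i hi)]
  ext i j
  simp only [Matrix.of_apply, Matrix.sum_apply]
  split_ifs <;> simp [Finset.sum_neg_distrib]

end Mutation

section Rotation

variable {N : ℕ} [NeZero N]

theorem rhoM_apply (i j : Fin N) : rhoM N i j = if i = j + 1 then 1 else 0 := by
  simp only [rhoM, Matrix.of_apply, Fin.ext_iff, Fin.val_add, Fin.val_one', Nat.add_mod_mod]

theorem mul_rhoM_apply (A : Matrix (Fin N) (Fin N) ℤ) (i j : Fin N) :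
    (A * rhoM N) i j = A i (j + 1) := by
  simp [Matrix.mul_apply, rhoM_apply]

theorem rhoM_transpose_mul_apply (A : Matrix (Fin N) (Fin N) ℤ) (i j : Fin N) :
    ((rhoM N)ᵀ * A) i j = A (i + 1) j := by
  simp [Matrix.mul_apply, rhoM_apply]

theorem rhoM_transpose_mul_rhoM : (rhoM N)ᵀ * rhoM N = 1 := by
  ext i j
  simp [rhoM_transpose_mul_apply, rhoM_apply, Matrix.one_apply]

theorem rhoM_inv : (rhoM N)⁻¹ = (rhoM N)ᵀ :=
  Matrix.inv_eq_left_inv rhoM_transpose_mul_rhoM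

theorem rhoM_inv_mul_rhoM : (rhoM N)⁻¹ * rhoM N = 1 := by
  rw [rhoM_inv, rhoM_transpose_mul_rhoM]

theorem rhoM_mul_rhoM_inv : rhoM N * (rhoM N)⁻¹ = 1 :=
  mul_eq_one_comm.mp rhoM_inv_mul_rhoM

theorem rhoM_inv_pow_mul_mul_rhoM_pow (k : ℕ) (A : Matrix (Fin N) (Fin N) ℤ) :
    (rhoM N)⁻¹ ^ k * A * rhoM N ^ k = A.submatrix (· + (k : Fin N)) (· + (k : Fin N)) := by
  induction k with
  | zero => simp only [pow_zero, Matrix.one_mul, Matrix.mul_one, Nat.cast_zero, add_zero]; rfl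
  | succ k ih =>
    have peel : (rhoM N)⁻¹ ^ (k + 1) * A * rhoM N ^ (k + 1)
        = (rhoM N)⁻¹ * ((rhoM N)⁻¹ ^ k * A * rhoM N ^ k) * rhoM N := by
      rw [pow_succ' (rhoM N)⁻¹, pow_succ (rhoM N)]
      simp only [Matrix.mul_assoc]
    rw [peel, ih]
    ext i j
    simp [rhoM_inv, mul_rhoM_apply, rhoM_transpose_mul_apply, add_assoc, add_comm (1 : Fin N)]

theorem transpose_rhoM_conj (i : ℕ) (A : Matrix (Fin N) (Fin N) ℤ) :
    ((rhoM N)⁻¹ ^ i * A * rhoM N ^ i)ᵀ = (rhoM N)⁻¹ ^ i * Aᵀ * rhoM N ^ i := by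
  simp only [rhoM_inv_pow_mul_mul_rhoM_pow, Matrix.transpose_submatrix]

theorem IsSink.rhoM_conj {i : ℕ} {A : Matrix (Fin N) (Fin N) ℤ} (hA : IsSink (i : Fin N) A) :
    IsSink 0 ((rhoM N)⁻¹ ^ i * A * rhoM N ^ i) := by
  rw [rhoM_inv_pow_mul_mul_rhoM_pow]
  exact IsSink.submatrix (Equiv.addRight (i : Fin N)) (by simpa using hA)

theorem rhoM_conj_mutB (i : ℕ) (A : Matrix (Fin N) (Fin N) ℤ) :
    (rhoM N)⁻¹ ^ i * mutB (i : Fin N) A * rhoM N ^ i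
      = mutB 0 ((rhoM N)⁻¹ ^ i * A * rhoM N ^ i) := by
  simp only [rhoM_inv_pow_mul_mul_rhoM_pow]
  rw [← Equiv.coe_addRight, mutB_submatrix, Equiv.coe_addRight]
  simp only [zero_add]

end Rotation

section Chain

variable {N : ℕ} [NeZero N] {B : Matrix (Fin N) (Fin N) ℤ}

theorem mutChain_succ (i : ℕ) : mutChain B (i + 1) = mutB (i : Fin N) (mutChain B i) := by
  rw [mutChain, mutAt, dif_pos (Nat.pos_of_neZero N)]
  congr

theorem transpose_mutChain {m : ℕ} (hB : Bᵀ = -B)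
    (hsink : ∀ i < m, IsSink (i : Fin N) (mutChain B i)) :
    ∀ i ≤ m, (mutChain B i)ᵀ = -mutChain B i
  | 0, _ => hB
  | i + 1, hi => by
    rw [mutChain_succ]
    exact transpose_mutB_of_isSink (transpose_mutChain hB hsink i (by omega)) (hsink i (by omega))

end Chain

/-- If `B` is a period `m` sink-type matrix, then
`C = Σ_{i=1}^m ρ^{−(i−1)} B(i) ρ^{i−1}` has mutation period 1. -/
theorem stmt8 (N m : ℕ) (hN : 2 ≤ N)
    (B : Matrix (Fin N) (Fin N) ℤ) (hskew : Bᵀ = -B)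
    (hsink : ∀ i < m, IsSink ⟨i % N, Nat.mod_lt _ (by omega)⟩ (mutChain B i))
    (hper : mutChain B m = rhoM N ^ m * B * ((rhoM N)⁻¹) ^ m) :
    mutB ⟨0, by omega⟩ (∑ i ∈ Finset.range m, ((rhoM N)⁻¹) ^ i * mutChain B i * rhoM N ^ i)
      = rhoM N * (∑ i ∈ Finset.range m, ((rhoM N)⁻¹) ^ i * mutChain B i * rhoM N ^ i)
        * (rhoM N)⁻¹ := by
  have : NeZero N := ⟨by omega⟩
  have hsink' : ∀ i < m, IsSink (i : Fin N) (mutChain B i) := fun i hi => by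
    convert hsink i hi
    exact Fin.val_natCast i N
  have hskew' := transpose_mutChain hskew hsink'
  calc mutB 0 (∑ i ∈ Finset.range m, (rhoM N)⁻¹ ^ i * mutChain B i * rhoM N ^ i)
      = ∑ i ∈ Finset.range m, mutB 0 ((rhoM N)⁻¹ ^ i * mutChain B i * rhoM N ^ i) := by
        refine mutB_sum_of_isSink (fun i hi => ?_)
          (fun i hi => (hsink' i (Finset.mem_range.mp hi)).rhoM_conj)
        rw [transpose_rhoM_conj, hskew' i (Finset.mem_range.mp hi).le, Matrix.mul_neg,
          Matrix.neg_mul]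
    _ = ∑ i ∈ Finset.range m, (rhoM N)⁻¹ ^ i * mutChain B (i + 1) * rhoM N ^ i := by
        simp only [mutChain_succ, rhoM_conj_mutB]
    _ = _ := sum_range_conj_succ_eq_conj_sum rhoM_mul_rhoM_inv rhoM_inv_mul_rhoM hper
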